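/- Let F0∈ℝ and let ψ,u,v∥,ρ be smooth on {R>0}×ℝ_φ×ℝ_Z; set B := ((1/R)∂_Zψ)e_R+(F0/R)e_φ+(−(1/R)∂_Rψ)e_Z, v_pol := (−R∂_Zu)e_R+(R∂_Ru)e_Z, j := Δ*ψ, and |B_pol|² := ((∂_Rψ)²+(∂_Zψ)²)/R². Then B·( ρ (v∥B)·∇v_pol ) = −Rρv∥[u, |B_pol|²/2] + ρv∥(j/R)[u,ψ] + (ρv∥/R)[ψ, (∇_polψ·∇_polu)] − (ρv∥F0/R²)(∇_polψ·∇_pol(∂_φu)) − ρv∥(F0²/R²)∂_Zu, where ∇_pol a·∇_pol b := ∂_Ra∂_Rb+∂_Za∂_Zb. -/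

import Mathlib

/-!
Every term on either side is, at a fixed point with `R > 0`, a rational function of `R` and of
the first and second partial derivatives of `ψ` and `u` there. The partials of the components of
`v_pol`, of `|B_pol|²/2`, of `∇_pol ψ · ∇_pol u` and of `(1/R) ∂_R ψ` follow from the product and
quotient rules; once the mixed partials of `ψ` and `u` are identified (Schwarz), the claim is an
identity of rational functions with denominators powers of `R`.
-/

noncomputable section
set_option linter.unusedVariables false

open Real

/-- Scalar fields on the cylindrical domain, as functions of `(R, φ, Z)`. -/
abbrev F3 := ℝ → ℝ → ℝ → ℝ

/-- Partial derivative in `R`. -/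
def dR (f : F3) (R φ Z : ℝ) : ℝ := deriv (fun r => f r φ Z) R

/-- Partial derivative in `φ`. -/
def dP (f : F3) (R φ Z : ℝ) : ℝ := deriv (fun a => f R a Z) φ

/-- Partial derivative in `Z`. -/
def dZ (f : F3) (R φ Z : ℝ) : ℝ := deriv (fun z => f R φ z) Z

/-- Joint smoothness (C^∞) of a scalar field. -/
def Smooth3 (f : F3) : Prop :=
  ContDiff ℝ (⊤ : ℕ∞) fun q : ℝ × ℝ × ℝ => f q.1 q.2.1 q.2.2

/-- Poisson bracket `[a,b] = ∂_R a ∂_Z b − ∂_Z a ∂_R b`. -/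
def pb (a b : F3) (R φ Z : ℝ) : ℝ :=
  dR a R φ Z * dZ b R φ Z - dZ a R φ Z * dR b R φ Z

/-- Grad–Shafranov operator `Δ* f = R ∂_R((1/R) ∂_R f) + ∂_ZZ f`. -/
def GS (f : F3) (R φ Z : ℝ) : ℝ :=
  R * dR (fun r a z => (1 / r) * dR f r a z) R φ Z + dZ (dZ f) R φ Z

/-- Poloidal Laplacian `Δ_pol f = (1/R) ∂_R(R ∂_R f) + ∂_ZZ f`. -/
def LapPol (f : F3) (R φ Z : ℝ) : ℝ :=
  (1 / R) * dR (fun r a z => r * dR f r a z) R φ Z + dZ (dZ f) R φ Z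

/-- Cylindrical divergence `∇·F = (1/R)∂_R(R F_R) + (1/R)∂_φ F_φ + ∂_Z F_Z`. -/
def divC (FR Fφ FZ : F3) (R φ Z : ℝ) : ℝ :=
  (1 / R) * dR (fun r a z => r * FR r a z) R φ Z + (1 / R) * dP Fφ R φ Z + dZ FZ R φ Z

/-- Scalar advection `X·∇f = X_R ∂_R f + (X_φ/R) ∂_φ f + X_Z ∂_Z f`. -/
def advS (XvR XvP XvZ f : F3) (R φ Z : ℝ) : ℝ :=
  XvR R φ Z * dR f R φ Z + XvP R φ Z / R * dP f R φ Z + XvZ R φ Z * dZ f R φ Z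

/-- `e_R`-component of the vector advection `X·∇Y`. -/
def advVR (XvR XvP XvZ YvR YvP YvZ : F3) (R φ Z : ℝ) : ℝ :=
  advS XvR XvP XvZ YvR R φ Z - XvP R φ Z * YvP R φ Z / R

/-- `e_φ`-component of the vector advection `X·∇Y`. -/
def advVP (XvR XvP XvZ YvR YvP YvZ : F3) (R φ Z : ℝ) : ℝ :=
  advS XvR XvP XvZ YvP R φ Z + XvP R φ Z * YvR R φ Z / R

/-- `e_Z`-component of the vector advection `X·∇Y`. -/
def advVZ (XvR XvP XvZ YvR YvP YvZ : F3) (R φ Z : ℝ) : ℝ :=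
  advS XvR XvP XvZ YvZ R φ Z

/-- `e_R`-component of `B = (1/R)∇ψ×e_φ + (F0/R)e_φ`. -/
def BR (ψ : F3) : F3 := fun R φ Z => (1 / R) * dZ ψ R φ Z

/-- `e_φ`-component of the magnetic field. -/
def BP (F0 : ℝ) : F3 := fun R _ _ => F0 / R

/-- `e_Z`-component of the magnetic field. -/
def BZ (ψ : F3) : F3 := fun R φ Z => -(1 / R) * dR ψ R φ Z

/-- `e_R`-component of `v_pol = −R∇u×e_φ`. -/
def vR (u : F3) : F3 := fun R φ Z => -R * dZ u R φ Z

/-- `e_Z`-component of `v_pol = −R∇u×e_φ`. -/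
def vZ (u : F3) : F3 := fun R φ Z => R * dR u R φ Z

/-- The zero field. -/
def zeroF : F3 := fun _ _ _ => 0

/-- `|B|² = (F0² + (∂_Rψ)² + (∂_Zψ)²)/R²`. -/
def B2 (F0 : ℝ) (ψ : F3) : F3 := fun R φ Z =>
  (F0 ^ 2 + (dR ψ R φ Z) ^ 2 + (dZ ψ R φ Z) ^ 2) / R ^ 2

/-- `|B_pol|² = ((∂_Rψ)² + (∂_Zψ)²)/R²`. -/
def Bpol2 (ψ : F3) : F3 := fun R φ Z => ((dR ψ R φ Z) ^ 2 + (dZ ψ R φ Z) ^ 2) / R ^ 2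

/-- `ρ̂ = R²ρ`. -/
def rh (ρ : F3) : F3 := fun R φ Z => R ^ 2 * ρ R φ Z

/-- `∇_pol a · ∇_pol b`. -/
def gdot (a b : F3) : F3 := fun R φ Z =>
  dR a R φ Z * dR b R φ Z + dZ a R φ Z * dZ b R φ Z

/-- `e_R`-component of `v∥ B`. -/
def XR (ψ vpar : F3) : F3 := fun R φ Z => vpar R φ Z * BR ψ R φ Z

/-- `e_φ`-component of `v∥ B`. -/
def XP (F0 : ℝ) (vpar : F3) : F3 := fun R φ Z => vpar R φ Z * BP F0 R φ Z

/-- `e_Z`-component of `v∥ B`. -/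
def XZ (ψ vpar : F3) : F3 := fun R φ Z => vpar R φ Z * BZ ψ R φ Z

def uncurry3 (f : F3) : ℝ × ℝ × ℝ → ℝ := fun q => f q.1 q.2.1 q.2.2

theorem fderiv_fderiv_apply_comm {E F : Type*} [NormedAddCommGroup E] [NormedSpace ℝ E]
    [NormedAddCommGroup F] [NormedSpace ℝ F] {f : E → F} (hf : ContDiff ℝ 2 f) (x v w : E) :
    fderiv ℝ (fun p => fderiv ℝ f p v) x w = fderiv ℝ (fun p => fderiv ℝ f p w) x v := by
  have hf' : Differentiable ℝ (fderiv ℝ f) :=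
    (hf.fderiv_right (m := 1) (by norm_num)).differentiable one_ne_zero
  rw [fderiv_clm_apply (hf' x) (differentiableAt_const v),
    fderiv_clm_apply (hf' x) (differentiableAt_const w)]
  simpa using ((hf.contDiffAt (x := x)).isSymmSndFDerivAt (by simp)).eq w v

section Partials

variable {f : F3} {R φ Z : ℝ}

lemma hasDerivAt_dR (hf : DifferentiableAt ℝ (uncurry3 f) (R, φ, Z)) :
    HasDerivAt (fun r => f r φ Z) (dR f R φ Z) R :=
  (hf.comp (f := fun r => (r, φ, Z)) R
    (differentiableAt_id.prodMk (differentiableAt_const (φ, Z)))).hasDerivAt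

lemma hasDerivAt_dP (hf : DifferentiableAt ℝ (uncurry3 f) (R, φ, Z)) :
    HasDerivAt (fun a => f R a Z) (dP f R φ Z) φ :=
  (hf.comp (f := fun a => (R, a, Z)) φ ((differentiableAt_const R).prodMk
    (differentiableAt_id.prodMk (differentiableAt_const Z)))).hasDerivAt

lemma hasDerivAt_dZ (hf : DifferentiableAt ℝ (uncurry3 f) (R, φ, Z)) :
    HasDerivAt (fun z => f R φ z) (dZ f R φ Z) Z :=
  (hf.comp (f := fun z => (R, φ, z)) Z ((differentiableAt_const R).prodMk
    ((differentiableAt_const φ).prodMk differentiableAt_id))).hasDerivAt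

lemma dR_eq_fderiv (hf : DifferentiableAt ℝ (uncurry3 f) (R, φ, Z)) :
    dR f R φ Z = fderiv ℝ (uncurry3 f) (R, φ, Z) (1, 0, 0) :=
  (hf.hasFDerivAt.comp_hasDerivAt (l := uncurry3 f) R
    ((hasDerivAt_id R).prodMk (hasDerivAt_const R (φ, Z)))).deriv

lemma dP_eq_fderiv (hf : DifferentiableAt ℝ (uncurry3 f) (R, φ, Z)) :
    dP f R φ Z = fderiv ℝ (uncurry3 f) (R, φ, Z) (0, 1, 0) :=
  (hf.hasFDerivAt.comp_hasDerivAt (l := uncurry3 f) φ ((hasDerivAt_const φ R).prodMk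
    ((hasDerivAt_id φ).prodMk (hasDerivAt_const φ Z)))).deriv

lemma dZ_eq_fderiv (hf : DifferentiableAt ℝ (uncurry3 f) (R, φ, Z)) :
    dZ f R φ Z = fderiv ℝ (uncurry3 f) (R, φ, Z) (0, 0, 1) :=
  (hf.hasFDerivAt.comp_hasDerivAt (l := uncurry3 f) Z ((hasDerivAt_const Z R).prodMk
    ((hasDerivAt_const Z φ).prodMk (hasDerivAt_id Z)))).deriv

lemma uncurry3_dR (hf : Differentiable ℝ (uncurry3 f)) :
    uncurry3 (dR f) = fun p => fderiv ℝ (uncurry3 f) p (1, 0, 0) :=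
  funext fun _ => dR_eq_fderiv (hf _)

lemma uncurry3_dP (hf : Differentiable ℝ (uncurry3 f)) :
    uncurry3 (dP f) = fun p => fderiv ℝ (uncurry3 f) p (0, 1, 0) :=
  funext fun _ => dP_eq_fderiv (hf _)

lemma uncurry3_dZ (hf : Differentiable ℝ (uncurry3 f)) :
    uncurry3 (dZ f) = fun p => fderiv ℝ (uncurry3 f) p (0, 0, 1) :=
  funext fun _ => dZ_eq_fderiv (hf _)

end Partials

namespace Smooth3

variable {f : F3}

lemma differentiable (hf : Smooth3 f) : Differentiable ℝ (uncurry3 f) :=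
  ContDiff.differentiable hf (by simp)

lemma contDiff_two (hf : Smooth3 f) : ContDiff ℝ 2 (uncurry3 f) :=
  ContDiff.of_le hf (WithTop.coe_le_coe.mpr le_top)

lemma contDiff_fderiv_apply (hf : Smooth3 f) (v : ℝ × ℝ × ℝ) :
    ContDiff ℝ (⊤ : ℕ∞) fun p => fderiv ℝ (uncurry3 f) p v :=
  (ContDiff.fderiv_right hf (by exact_mod_cast le_top)).clm_apply contDiff_const

lemma dR (hf : Smooth3 f) : Smooth3 (dR f) := by
  show ContDiff ℝ _ (uncurry3 (_root_.dR f))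
  rw [uncurry3_dR hf.differentiable]
  exact hf.contDiff_fderiv_apply _

lemma dP (hf : Smooth3 f) : Smooth3 (dP f) := by
  show ContDiff ℝ _ (uncurry3 (_root_.dP f))
  rw [uncurry3_dP hf.differentiable]
  exact hf.contDiff_fderiv_apply _

lemma dZ (hf : Smooth3 f) : Smooth3 (dZ f) := by
  show ContDiff ℝ _ (uncurry3 (_root_.dZ f))
  rw [uncurry3_dZ hf.differentiable]
  exact hf.contDiff_fderiv_apply _

end Smooth3

section MixedPartials

variable {f : F3} {R φ Z : ℝ}

lemma dZ_dR_comm (hf : Smooth3 f) : dZ (dR f) R φ Z = dR (dZ f) R φ Z := by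
  rw [dZ_eq_fderiv (hf.dR.differentiable _), dR_eq_fderiv (hf.dZ.differentiable _),
    uncurry3_dR hf.differentiable, uncurry3_dZ hf.differentiable]
  exact fderiv_fderiv_apply_comm hf.contDiff_two _ _ _

lemma dP_dR_comm (hf : Smooth3 f) : dP (dR f) R φ Z = dR (dP f) R φ Z := by
  rw [dP_eq_fderiv (hf.dR.differentiable _), dR_eq_fderiv (hf.dP.differentiable _),
    uncurry3_dR hf.differentiable, uncurry3_dP hf.differentiable]
  exact fderiv_fderiv_apply_comm hf.contDiff_two _ _ _

lemma dP_dZ_comm (hf : Smooth3 f) : dP (dZ f) R φ Z = dZ (dP f) R φ Z := by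
  rw [dP_eq_fderiv (hf.dZ.differentiable _), dZ_eq_fderiv (hf.dP.differentiable _),
    uncurry3_dZ hf.differentiable, uncurry3_dP hf.differentiable]
  exact fderiv_fderiv_apply_comm hf.contDiff_two _ _ _

end MixedPartials

section FieldDerivatives

variable {ψ u : F3} {R φ Z : ℝ}

lemma dR_vR (hu : Smooth3 u) : dR (vR u) R φ Z = -dZ u R φ Z - R * dR (dZ u) R φ Z :=
  ((hasDerivAt_id' R).fun_neg.fun_mul
    (hasDerivAt_dR (hu.dZ.differentiable (R, φ, Z)))).deriv.trans (by ring)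

lemma dP_vR (hu : Smooth3 u) : dP (vR u) R φ Z = -R * dP (dZ u) R φ Z :=
  ((hasDerivAt_dP (hu.dZ.differentiable (R, φ, Z))).const_mul (-R)).deriv

lemma dZ_vR (hu : Smooth3 u) : dZ (vR u) R φ Z = -R * dZ (dZ u) R φ Z :=
  ((hasDerivAt_dZ (hu.dZ.differentiable (R, φ, Z))).const_mul (-R)).deriv

lemma dR_vZ (hu : Smooth3 u) : dR (vZ u) R φ Z = dR u R φ Z + R * dR (dR u) R φ Z :=
  ((hasDerivAt_id' R).fun_mul
    (hasDerivAt_dR (hu.dR.differentiable (R, φ, Z)))).deriv.trans (by ring)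

lemma dP_vZ (hu : Smooth3 u) : dP (vZ u) R φ Z = R * dP (dR u) R φ Z :=
  ((hasDerivAt_dP (hu.dR.differentiable (R, φ, Z))).const_mul R).deriv

lemma dZ_vZ (hu : Smooth3 u) : dZ (vZ u) R φ Z = R * dZ (dR u) R φ Z :=
  ((hasDerivAt_dZ (hu.dR.differentiable (R, φ, Z))).const_mul R).deriv

lemma advS_zeroF (XvR XvP XvZ : F3) : advS XvR XvP XvZ zeroF R φ Z = 0 := by
  simp [advS, dR, dP, dZ, zeroF]

lemma GS_eq_of_ne_zero (hψ : Smooth3 ψ) (hR : R ≠ 0) :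
    GS ψ R φ Z = dR (dR ψ) R φ Z - dR ψ R φ Z / R + dZ (dZ ψ) R φ Z := by
  have h := ((hasDerivAt_const R (1 : ℝ)).fun_div (hasDerivAt_id' R) hR).fun_mul
    (hasDerivAt_dR (hψ.dR.differentiable (R, φ, Z)))
  rw [GS, show dR (fun r a z => 1 / r * dR ψ r a z) R φ Z = _ from h.deriv]
  field_simp
  ring

lemma dR_gdot {a b : F3} (ha : Smooth3 a) (hb : Smooth3 b) :
    dR (gdot a b) R φ Z = dR (dR a) R φ Z * dR b R φ Z + dR a R φ Z * dR (dR b) R φ Z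
      + (dR (dZ a) R φ Z * dZ b R φ Z + dZ a R φ Z * dR (dZ b) R φ Z) :=
  (((hasDerivAt_dR (ha.dR.differentiable _)).fun_mul
    (hasDerivAt_dR (hb.dR.differentiable _))).fun_add
    ((hasDerivAt_dR (ha.dZ.differentiable _)).fun_mul
    (hasDerivAt_dR (hb.dZ.differentiable _)))).deriv

lemma dZ_gdot {a b : F3} (ha : Smooth3 a) (hb : Smooth3 b) :
    dZ (gdot a b) R φ Z = dZ (dR a) R φ Z * dR b R φ Z + dR a R φ Z * dZ (dR b) R φ Z
      + (dZ (dZ a) R φ Z * dZ b R φ Z + dZ a R φ Z * dZ (dZ b) R φ Z) :=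
  (((hasDerivAt_dZ (ha.dR.differentiable _)).fun_mul
    (hasDerivAt_dZ (hb.dR.differentiable _))).fun_add
    ((hasDerivAt_dZ (ha.dZ.differentiable _)).fun_mul
    (hasDerivAt_dZ (hb.dZ.differentiable _)))).deriv

lemma dR_half_Bpol2 (hψ : Smooth3 ψ) (hR : R ≠ 0) :
    dR (fun r a z => Bpol2 ψ r a z / 2) R φ Z
      = (dR ψ R φ Z * dR (dR ψ) R φ Z + dZ ψ R φ Z * dR (dZ ψ) R φ Z) / R ^ 2
        - (dR ψ R φ Z ^ 2 + dZ ψ R φ Z ^ 2) / R ^ 3 := by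
  refine ((((hasDerivAt_dR (hψ.dR.differentiable (R, φ, Z))).fun_pow 2).fun_add
    ((hasDerivAt_dR (hψ.dZ.differentiable (R, φ, Z))).fun_pow 2)).fun_div
    (hasDerivAt_pow 2 R) (pow_ne_zero 2 hR)).div_const 2 |>.deriv.trans ?_
  field_simp
  ring

lemma dZ_half_Bpol2 (hψ : Smooth3 ψ) :
    dZ (fun r a z => Bpol2 ψ r a z / 2) R φ Z
      = (dR ψ R φ Z * dZ (dR ψ) R φ Z + dZ ψ R φ Z * dZ (dZ ψ) R φ Z) / R ^ 2 :=
  ((((hasDerivAt_dZ (hψ.dR.differentiable (R, φ, Z))).fun_pow 2).fun_add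
    ((hasDerivAt_dZ (hψ.dZ.differentiable (R, φ, Z))).fun_pow 2)).div_const (R ^ 2)).div_const 2
    |>.deriv.trans (by ring)

end FieldDerivatives

theorem B_dot_mixed_advection_par_pol_general (F0 : ℝ) (ψ u vpar ρ : F3)
    (hψ : Smooth3 ψ) (hu : Smooth3 u) :
    ∀ R φ Z : ℝ, 0 < R →
      BR ψ R φ Z * (ρ R φ Z
          * advVR (XR ψ vpar) (XP F0 vpar) (XZ ψ vpar) (vR u) zeroF (vZ u) R φ Z)
        + BP F0 R φ Z * (ρ R φ Z
          * advVP (XR ψ vpar) (XP F0 vpar) (XZ ψ vpar) (vR u) zeroF (vZ u) R φ Z)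
        + BZ ψ R φ Z * (ρ R φ Z
          * advVZ (XR ψ vpar) (XP F0 vpar) (XZ ψ vpar) (vR u) zeroF (vZ u) R φ Z)
      = -(R * ρ R φ Z * vpar R φ Z) * pb u (fun r a z => Bpol2 ψ r a z / 2) R φ Z
        + ρ R φ Z * vpar R φ Z * (GS ψ R φ Z / R) * pb u ψ R φ Z
        + (ρ R φ Z * vpar R φ Z / R) * pb ψ (gdot ψ u) R φ Z
        - (ρ R φ Z * vpar R φ Z * F0 / R ^ 2)
            * (dR ψ R φ Z * dR (dP u) R φ Z + dZ ψ R φ Z * dZ (dP u) R φ Z)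
        - ρ R φ Z * vpar R φ Z * (F0 ^ 2 / R ^ 2) * dZ u R φ Z := by
  intro R φ Z hR
  simp only [advVP, advS_zeroF]
  simp only [advVR, advVZ, advS, XR, XP, XZ, BR, BP, BZ, pb, zeroF]
  rw [dR_vR hu, dP_vR hu, dZ_vR hu, dR_vZ hu, dP_vZ hu, dZ_vZ hu, GS_eq_of_ne_zero hψ hR.ne',
    dR_half_Bpol2 hψ hR.ne', dZ_half_Bpol2 hψ, dR_gdot hψ hu, dZ_gdot hψ hu,
    dZ_dR_comm hψ, dZ_dR_comm hu, dP_dZ_comm hu, dP_dR_comm hu]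
  simp only [vR]
  field_simp
  ring

/-- `B·(ρ ((v∥B)·∇v_pol))` in terms of reduced-MHD quantities. -/
theorem B_dot_mixed_advection_par_pol (F0 : ℝ) (ψ u vpar ρ : F3)
    (hψ : Smooth3 ψ) (hu : Smooth3 u) (hv : Smooth3 vpar) (hρ : Smooth3 ρ) :
    ∀ R φ Z : ℝ, 0 < R →
      BR ψ R φ Z * (ρ R φ Z
          * advVR (XR ψ vpar) (XP F0 vpar) (XZ ψ vpar) (vR u) zeroF (vZ u) R φ Z)
        + BP F0 R φ Z * (ρ R φ Z
          * advVP (XR ψ vpar) (XP F0 vpar) (XZ ψ vpar) (vR u) zeroF (vZ u) R φ Z)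
        + BZ ψ R φ Z * (ρ R φ Z
          * advVZ (XR ψ vpar) (XP F0 vpar) (XZ ψ vpar) (vR u) zeroF (vZ u) R φ Z)
      = -(R * ρ R φ Z * vpar R φ Z) * pb u (fun r a z => Bpol2 ψ r a z / 2) R φ Z
        + ρ R φ Z * vpar R φ Z * (GS ψ R φ Z / R) * pb u ψ R φ Z
        + (ρ R φ Z * vpar R φ Z / R) * pb ψ (gdot ψ u) R φ Z
        - (ρ R φ Z * vpar R φ Z * F0 / R ^ 2)
            * (dR ψ R φ Z * dR (dP u) R φ Z + dZ ψ R φ Z * dZ (dP u) R φ Z)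
        - ρ R φ Z * vpar R φ Z * (F0 ^ 2 / R ^ 2) * dZ u R φ Z :=
  B_dot_mixed_advection_par_pol_general F0 ψ u vpar ρ hψ hu
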